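/- arXiv:2406.05775 — 3 statements merged into one kernel-verified Lean document; each statement's English description precedes it below -/
import Mathlib

section
/- Let S ⊆ T ⊆ [n] with u sorted nonincreasingly and γ ≥ 1. Then (i) k_S ≥ k_T and u_{k_S} ≤ u_{k_T}, and (ii) u(T^γ) ≥ u(S^γ), where k_S, S^γ are as defined (k_S = n+1 if |S| ≤ γ−1, otherwise the γ-th smallest element of S; S^γ = S ∩ [k_S]). -/
/-!
Enlarging a finset can only lower its `i`-th smallest element, since a superset has at least as
many elements below any bound; this gives `k_T ≤ k_S`. The set `S^γ` consists of the
`min γ |S|` smallest elements of `S`, so `|S^γ| ≤ |T^γ|`; every element of `S^γ \ T^γ` lies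
above `k_T` and every element of `T^γ` at or below it. As `u` is nonincreasing with
`u k_T ≥ u (n + 1) = 0`, exchanging `S^γ \ T^γ` for the at least as large set `T^γ \ S^γ`
can only increase the sum.
-/

open Finset

/-- The probability function `Φ(S) = max { u(S')/(u(S')+u₀) : S' ⊆ S, |S'| ≤ γ }`. -/
noncomputable def Phi (γ : ℕ) (u : ℕ → ℝ) (u0 : ℝ) (S : Finset ℕ) : ℝ :=
  ((S.powerset.filter fun S' => S'.card ≤ γ).image
      fun S' => (∑ j ∈ S', u j) / ((∑ j ∈ S', u j) + u0)).max'
    (Finset.Nonempty.image ⟨∅, Finset.mem_filter.mpr ⟨Finset.empty_mem_powerset S, by simp⟩⟩ _)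

/-- `k_S = n+1` if `|S| ≤ γ-1`, otherwise the `γ`-th smallest element of `S`. -/
def kS (γ n : ℕ) (S : Finset ℕ) : ℕ :=
  if S.card ≤ γ - 1 then n + 1 else (S.sort (· ≤ ·)).getD (γ - 1) 0

/-- `S^γ = S ∩ [k_S]`. -/
def Sgamma (γ n : ℕ) (S : Finset ℕ) : Finset ℕ :=
  S ∩ Finset.Icc 1 (kS γ n S)

namespace Finset

lemma sum_le_sum_of_card_le_of_forall_sdiff {ι M : Type*} [DecidableEq ι] [AddCommMonoid M]
    [PartialOrder M] [IsOrderedAddMonoid M] {s t : Finset ι} {f : ι → M} {c : M} (hc : 0 ≤ c)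
    (hst : #s ≤ #t) (hs : ∀ i ∈ s \ t, f i ≤ c) (ht : ∀ i ∈ t \ s, c ≤ f i) :
    ∑ i ∈ s, f i ≤ ∑ i ∈ t, f i :=
  calc ∑ i ∈ s, f i ≤ ∑ i ∈ s ∩ t, f i + #(s \ t) • c := by
        rw [← sum_inter_add_sum_sdiff s t]
        gcongr
        exact sum_le_card_nsmul _ _ _ hs
    _ ≤ ∑ i ∈ t ∩ s, f i + #(t \ s) • c := by
        rw [inter_comm]
        exact add_le_add le_rfl (nsmul_le_nsmul_left hc (card_sdiff_le_card_sdiff_iff.2 hst))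
    _ ≤ ∑ i ∈ t, f i := by
        rw [← sum_inter_add_sum_sdiff t s]
        gcongr
        exact card_nsmul_le_sum _ _ _ ht

section OrderEmbOfFin

variable {α : Type*} [LinearOrder α]

lemma sort_getD_eq_orderEmbOfFin (s : Finset α) {i : ℕ} (hi : i < #s) (d : α) :
    (s.sort (· ≤ ·)).getD i d = s.orderEmbOfFin rfl ⟨i, hi⟩ := by
  rw [List.getD_eq_getElem _ _ (by simpa using hi)]
  rfl

lemma card_filter_lt_orderEmbOfFin (s : Finset α) (i : Fin #s) :
    #(s.filter (· < s.orderEmbOfFin rfl i)) = i := by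
  set e := s.orderEmbOfFin rfl
  calc #(s.filter (· < e i)) = #((univ.map e.toEmbedding).filter (· < e i)) := by
        rw [map_orderEmbOfFin_univ]
    _ = i := by simp [filter_map, filter_gt_eq_Iio]

lemma card_filter_le_orderEmbOfFin (s : Finset α) (i : Fin #s) :
    #(s.filter (· ≤ s.orderEmbOfFin rfl i)) = i + 1 := by
  set e := s.orderEmbOfFin rfl
  calc #(s.filter (· ≤ e i)) = #((univ.map e.toEmbedding).filter (· ≤ e i)) := by
        rw [map_orderEmbOfFin_univ]
    _ = i + 1 := by simp [filter_map, filter_ge_eq_Iic]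

lemma orderEmbOfFin_le_of_subset {s t : Finset α} (hst : s ⊆ t) {i : ℕ} (hi : i < #s) :
    t.orderEmbOfFin rfl ⟨i, hi.trans_le (card_le_card hst)⟩ ≤ s.orderEmbOfFin rfl ⟨i, hi⟩ := by
  set a := s.orderEmbOfFin rfl ⟨i, hi⟩
  set b := t.orderEmbOfFin rfl ⟨i, hi.trans_le (card_le_card hst)⟩
  by_contra! hab
  have hle : i + 1 ≤ #(t.filter (· ≤ a)) := by
    rw [← card_filter_le_orderEmbOfFin s ⟨i, hi⟩]
    exact card_le_card (filter_subset_filter _ hst)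
  have hlt : #(t.filter (· ≤ a)) ≤ i :=
    calc #(t.filter (· ≤ a)) ≤ #(t.filter (· < b)) :=
          card_le_card (monotone_filter_right _ fun _ _ hx => hx.trans_lt hab)
      _ = i := card_filter_lt_orderEmbOfFin t _
  omega

end OrderEmbOfFin

end Finset

section Threshold

variable {γ n : ℕ} {S T : Finset ℕ}

lemma kS_mem_Icc (hS : S ⊆ Icc 1 n) : kS γ n S ∈ Icc 1 (n + 1) := by
  unfold kS
  split_ifs with hcard
  · simp
  · rw [sort_getD_eq_orderEmbOfFin S (by omega)]
    exact Icc_subset_Icc_right n.le_succ (hS (orderEmbOfFin_mem _ _ _))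

lemma kS_anti (hST : S ⊆ T) (hT : T ⊆ Icc 1 n) : kS γ n T ≤ kS γ n S := by
  have hcard := card_le_card hST
  unfold kS
  split_ifs with hTγ hSγ hSγ
  · exact le_rfl
  · omega
  · rw [sort_getD_eq_orderEmbOfFin T (by omega)]
    exact (mem_Icc.1 (hT (orderEmbOfFin_mem _ _ _))).2.trans n.le_succ
  · rw [sort_getD_eq_orderEmbOfFin S (by omega), sort_getD_eq_orderEmbOfFin T (by omega)]
    exact orderEmbOfFin_le_of_subset hST (by omega)

lemma Sgamma_eq_filter (hS : S ⊆ Icc 1 n) : Sgamma γ n S = S.filter (· ≤ kS γ n S) := by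
  ext x
  have hx : x ∈ S → 1 ≤ x := fun h => (mem_Icc.1 (hS h)).1
  simp only [Sgamma, mem_inter, mem_Icc, mem_filter]
  tauto

lemma card_Sgamma (hγ : 1 ≤ γ) (hS : S ⊆ Icc 1 n) : #(Sgamma γ n S) = min γ #S := by
  rw [Sgamma_eq_filter hS]
  by_cases hcard : #S ≤ γ - 1
  · have hle : ∀ x ∈ S, x ≤ kS γ n S := fun x hx => by
      simpa [kS, hcard] using (mem_Icc.1 (hS hx)).2.trans n.le_succ
    rw [filter_true_of_mem hle]
    omega
  · have hk : kS γ n S = S.orderEmbOfFin rfl ⟨γ - 1, by omega⟩ := by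
      rw [kS, if_neg hcard, sort_getD_eq_orderEmbOfFin]
    rw [hk, card_filter_le_orderEmbOfFin, Fin.val_mk]
    omega

end Threshold

theorem stmt_3_general (n γ : ℕ) (hγ : 1 ≤ γ) (u : ℕ → ℝ)
    (hn1 : u (n + 1) = 0)
    (hmono : ∀ j ∈ Finset.Icc 1 (n+1), ∀ k ∈ Finset.Icc 1 (n+1), j ≤ k → u k ≤ u j)
    (S T : Finset ℕ) (hST : S ⊆ T) (hT : T ⊆ Finset.Icc 1 n) :
    kS γ n T ≤ kS γ n S ∧ u (kS γ n S) ≤ u (kS γ n T) ∧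
    (∑ j ∈ Sgamma γ n S, u j) ≤ ∑ j ∈ Sgamma γ n T, u j := by
  have hS := hST.trans hT
  have hIcc : Icc 1 n ⊆ Icc 1 (n + 1) := Icc_subset_Icc_right n.le_succ
  have hkS := kS_mem_Icc (γ := γ) hS
  have hkT := kS_mem_Icc (γ := γ) hT
  have hk := kS_anti (γ := γ) hST hT
  refine ⟨hk, hmono _ hkT _ hkS hk, ?_⟩
  refine sum_le_sum_of_card_le_of_forall_sdiff (c := u (kS γ n T)) ?_ ?_ ?_ ?_
  · exact hn1 ▸ hmono _ hkT _ (right_mem_Icc.2 (by omega)) (mem_Icc.1 hkT).2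
  · rw [card_Sgamma hγ hS, card_Sgamma hγ hT]
    exact min_le_min_left _ (card_le_card hST)
  · intro a ha
    rw [Sgamma_eq_filter hS, Sgamma_eq_filter hT] at ha
    simp only [mem_sdiff, mem_filter, not_and, not_le] at ha
    exact hmono _ hkT _ (hIcc (hS ha.1.1)) (ha.2 (hST ha.1.1)).le
  · intro b hb
    rw [Sgamma_eq_filter hT] at hb
    simp only [mem_sdiff, mem_filter] at hb
    exact hmono _ (hIcc (hT hb.1.1)) _ hkT hb.1.2

/-- monotonicity facts: for `S ⊆ T ⊆ [n]`, `k_S ≥ k_T`, `u_{k_S} ≤ u_{k_T}`,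
and `u(T^γ) ≥ u(S^γ)`. -/
theorem stmt_3 (n γ : ℕ) (hγ : 1 ≤ γ) (u : ℕ → ℝ) (u0 : ℝ) (hu0 : 0 < u0)
    (hnn : ∀ j ∈ Finset.Icc 1 n, 0 ≤ u j) (hn1 : u (n + 1) = 0)
    (hmono : ∀ j ∈ Finset.Icc 1 (n+1), ∀ k ∈ Finset.Icc 1 (n+1), j ≤ k → u k ≤ u j)
    (S T : Finset ℕ) (hST : S ⊆ T) (hT : T ⊆ Finset.Icc 1 n) :
    kS γ n T ≤ kS γ n S ∧ u (kS γ n S) ≤ u (kS γ n T) ∧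
    (∑ j ∈ Sgamma γ n S, u j) ≤ ∑ j ∈ Sgamma γ n T, u j :=
  stmt_3_general n γ hγ u hn1 hmono S T hST hT
end

section
/- Let γ = 1, u₀ > 0, u₁ ≥ ... ≥ uₙ ≥ u_{n+1} := 0, Φ(S) = max_{j∈S} u_j/(u_j+u₀) (with Φ(∅)=0), and X = {(w,x) ∈ ℝ × {0,1}^n : w ≤ Φ(S^x)}. Then conv(X) = { (w,x) ∈ ℝ × [0,1]^n : w ≤ u_{ℓ+1}/(u_{ℓ+1}+u₀) + ∑_{j=1}^{n} ( u_j/(u_j+u₀) − u_{ℓ+1}/(u_{ℓ+1}+u₀) )⁺ x_j for all ℓ ∈ [n] }. -/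
/-!
`X` is contained in the polyhedron `P` since, for a 0/1 vector `x` and any `ℓ`, each term
`u_j/(u_j+u₀)` with `x_j = 1` is dominated by the right-hand side of the `ℓ`-th inequality.
Conversely, given `(w, x) ∈ P`, let `ℓ` be the last index at which the prefix sum
`x_1 + ⋯ + x_ℓ` is still at most `1`, and `r := 1 - (x_1 + ⋯ + x_ℓ)`. Then `x` is a convex
combination, with weights `x_1, …, x_ℓ, r`, of vectors `y` of `[0,1]^n` with `y_j = 1` for
`j = 1, …, ℓ + 1` respectively; they agree with `x` beyond `ℓ + 1`, and at `ℓ + 1` they share out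
the mass `x_{ℓ+1} ≥ r`. The point `(u_j/(u_j+u₀), y)` with `y_j = 1` lies in `conv X` since every
0/1 rounding of `y` keeping its ones contains `j`, and these values average to the right-hand
side of the `ℓ`-th inequality. As `conv X`, like `X`, is closed downwards in `w`, this proves
`(w, x) ∈ conv X`.
-/

open Finset

open scoped Pointwise

lemma mem_convexHull_binary_of_mem_Icc {ι : Type*} [Finite ι] {y : ι → ℝ}
    (hy : ∀ i, y i ∈ Set.Icc 0 1) :
    y ∈ convexHull ℝ {z | (∀ i, z i = 0 ∨ z i = 1) ∧ ∀ i, y i = 1 → z i = 1} := by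
  refine convexHull_mono (s := Set.univ.pi fun i => if y i = 1 then {1} else {0, 1}) ?_ ?_
  · intro z hz
    refine ⟨fun i => ?_, fun i hi => by simpa [hi] using hz i trivial⟩
    have := hz i trivial
    dsimp only at this
    split_ifs at this <;> simp_all
  · rw [convexHull_pi]
    intro i _
    dsimp only
    split_ifs with hi
    · simp [hi]
    · rw [convexHull_pair, segment_eq_Icc zero_le_one]
      exact hy i

lemma mem_convexHull_of_le_fst {E : Type*} [AddCommGroup E] [Module ℝ E] {s : Set (ℝ × E)}
    (hs : ∀ p ∈ s, ∀ w ≤ p.1, (w, p.2) ∈ s) {p : ℝ × E} (hp : p ∈ convexHull ℝ s) {w : ℝ}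
    (hw : w ≤ p.1) : (w, p.2) ∈ convexHull ℝ s := by
  have hshift : ((w - p.1, 0) : ℝ × E) +ᵥ s ⊆ s := by
    rintro _ ⟨q, hq, rfl⟩
    convert hs q hq (w - p.1 + q.1) (by linarith) using 1
    ext <;> simp
  refine convexHull_mono hshift ?_
  rw [convexHull_vadd]
  exact ⟨p, hp, by ext <;> simp⟩

lemma Convex.smul_add_sum_smul_mem {E ι : Type*} [AddCommGroup E] [Module ℝ E] {C : Set E}
    (hC : Convex ℝ C) {s : Finset ι} {r : ℝ} {w : ι → ℝ} {a : E} {z : ι → E} (hr : 0 ≤ r)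
    (hw : ∀ i ∈ s, 0 ≤ w i) (hsum : r + ∑ i ∈ s, w i = 1) (ha : a ∈ C) (hz : ∀ i ∈ s, z i ∈ C) :
    r • a + ∑ i ∈ s, w i • z i ∈ C := by
  have := hC.sum_mem (t := insertNone s) (w := fun o => o.elim r w) (z := fun o => o.elim a z)
    (by rintro (_ | i) hi; exacts [hr, hw i (by simpa using hi)]) (by rwa [sum_insertNone])
    (by rintro (_ | i) hi; exacts [ha, hz i (by simpa using hi)])
  rwa [sum_insertNone] at this

noncomputable def singletonValue (u : ℕ → ℝ) (u0 : ℝ) (k : ℕ) : ℝ := u k / (u k + u0)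

section Phi

variable {γ : ℕ} {u : ℕ → ℝ} {u0 : ℝ} {S : Finset ℕ}

lemma Phi_nonneg : 0 ≤ Phi γ u u0 S :=
  le_max' _ _ <| mem_image.2 ⟨∅, mem_filter.2 ⟨empty_mem_powerset S, by simp⟩, by simp⟩

lemma le_Phi_of_mem (hγ : 1 ≤ γ) {a : ℕ} (ha : a ∈ S) : singletonValue u u0 a ≤ Phi γ u u0 S :=
  le_max' _ _ <| mem_image.2
    ⟨{a}, mem_filter.2 ⟨mem_powerset.2 (singleton_subset_iff.2 ha), by simpa using hγ⟩,
      by simp [singletonValue]⟩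

lemma Phi_one_le {B : ℝ} (hB : 0 ≤ B) (h : ∀ a ∈ S, singletonValue u u0 a ≤ B) :
    Phi 1 u u0 S ≤ B := by
  refine max'_le _ _ _ fun v hv => ?_
  obtain ⟨S', hS', rfl⟩ := mem_image.1 hv
  obtain ⟨hsub, hcard⟩ := mem_filter.1 hS'
  obtain ⟨a, ha⟩ := card_le_one_iff_subset_singleton.1 hcard
  obtain rfl | rfl := subset_singleton_iff.1 ha
  · simpa using hB
  · simpa [singletonValue] using h a (singleton_subset_iff.1 (mem_powerset.1 hsub))

end Phi

lemma antitoneOn_singletonValue {u : ℕ → ℝ} {u0 : ℝ} {s : Set ℕ} (hu0 : 0 < u0)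
    (hu : AntitoneOn u s) (hnn : ∀ k ∈ s, 0 ≤ u k) : AntitoneOn (singletonValue u u0) s := by
  intro a ha b hb hab
  have hb0 := hnn b hb
  have hba := hu ha hb hab
  unfold singletonValue
  rw [div_le_div_iff₀ (by linarith) (by linarith)]
  nlinarith

variable {n : ℕ}

noncomputable def assortment (x : Fin n → ℝ) : Finset ℕ :=
  (univ.filter fun j : Fin n => x j = 1).image fun j : Fin n => (j : ℕ) + 1

noncomputable def mixedSet (n : ℕ) (u : ℕ → ℝ) (u0 : ℝ) : Set (ℝ × (Fin n → ℝ)) :=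
  {p | (∀ j, p.2 j = 0 ∨ p.2 j = 1) ∧ p.1 ≤ Phi 1 u u0 (assortment p.2)}

noncomputable def facetBound (g : ℕ → ℝ) (ℓ : ℕ) (x : Fin n → ℝ) : ℝ :=
  g (ℓ + 1) + ∑ j : Fin n, max (g (j + 1) - g (ℓ + 1)) 0 * x j

noncomputable def polytope (n : ℕ) (g : ℕ → ℝ) : Set (ℝ × (Fin n → ℝ)) :=
  {p | (∀ j, 0 ≤ p.2 j ∧ p.2 j ≤ 1) ∧ ∀ ℓ ∈ Finset.Icc 1 n, p.1 ≤ facetBound g ℓ p.2}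

noncomputable def prefixSum (x : Fin n → ℝ) (ℓ : ℕ) : ℝ := ∑ j with j.val < ℓ, x j

lemma prefixSum_succ (x : Fin n → ℝ) {ℓ : ℕ} (hℓ : ℓ < n) :
    prefixSum x (ℓ + 1) = prefixSum x ℓ + x ⟨ℓ, hℓ⟩ := by
  have : (univ.filter fun j : Fin n => (j : ℕ) < ℓ + 1) =
      insert ⟨ℓ, hℓ⟩ (univ.filter fun j : Fin n => (j : ℕ) < ℓ) := by
    ext j; simp [Fin.ext_iff]; omega
  rw [prefixSum, this, sum_insert (by simp), add_comm, prefixSum]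

lemma exists_prefixSum_crossing (hn : 1 ≤ n) {x : Fin n → ℝ} (hx : ∀ j, x j ∈ Set.Icc 0 1) :
    ∃ ℓ ∈ Finset.Icc 1 n, prefixSum x ℓ ≤ 1 ∧
      ∀ i : Fin n, (i : ℕ) = ℓ → 1 ≤ prefixSum x ℓ + x i := by
  let P : ℕ → Prop := fun ℓ => prefixSum x ℓ ≤ 1
  have h1 : P 1 := by
    show prefixSum x (0 + 1) ≤ 1
    rw [prefixSum_succ x hn]
    simpa [prefixSum] using (hx _).2
  refine ⟨Nat.findGreatest P n, Finset.mem_Icc.2 ⟨Nat.le_findGreatest hn h1,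
    Nat.findGreatest_le n⟩, Nat.findGreatest_spec hn h1, ?_⟩
  rintro ⟨i, h⟩ rfl
  rw [← prefixSum_succ]
  exact (not_le.1 (Nat.findGreatest_is_greatest (P := P) (Nat.lt_succ_self _) h)).le

noncomputable def tailVector (x : Fin n → ℝ) (ℓ : ℕ) (c : ℝ → ℝ) : Fin n → ℝ :=
  fun i => if (i : ℕ) < ℓ then 0 else if (i : ℕ) = ℓ then c (x i) else x i

lemma tailVector_mem_Icc {x : Fin n → ℝ} (hx : ∀ j, x j ∈ Set.Icc 0 1) {ℓ : ℕ} {c : ℝ → ℝ}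
    (hc : ∀ i : Fin n, (i : ℕ) = ℓ → c (x i) ∈ Set.Icc 0 1) (i : Fin n) :
    tailVector x ℓ c i ∈ Set.Icc 0 1 := by
  unfold tailVector
  split_ifs with _ h
  exacts [⟨le_rfl, zero_le_one⟩, hc i h, hx i]

lemma smul_tailVector_add_sum_smul_update {x : Fin n → ℝ} (hx : ∀ j, x j ∈ Set.Icc 0 1) {ℓ : ℕ}
    (hcross : ∀ i : Fin n, (i : ℕ) = ℓ → 1 ≤ prefixSum x ℓ + x i) :
    (1 - prefixSum x ℓ) • tailVector x ℓ (fun _ => 1) +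
      ∑ j with j.val < ℓ, x j •
        Function.update (tailVector x ℓ fun t => (t - (1 - prefixSum x ℓ)) / prefixSum x ℓ) j 1
      = x := by
  set S := prefixSum x ℓ
  ext i
  simp only [Pi.add_apply, Pi.smul_apply, Finset.sum_apply, smul_eq_mul, tailVector,
    Function.update_apply]
  by_cases hi : (i : ℕ) < ℓ
  · simp only [hi, if_true, mul_zero, zero_add, mul_ite, mul_one]
    rw [sum_ite_eq]
    simp [hi]
  · have hne : ∀ j ∈ univ.filter fun j : Fin n => j.val < ℓ, i ≠ j :=
      fun j hj h => hi (h ▸ (mem_filter.1 hj).2)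
    rw [sum_congr rfl fun j hj => by rw [if_neg (hne j hj)], ← sum_mul]
    change (1 - S) * _ + S * _ = x i
    simp only [hi, if_false]
    split_ifs with h2
    · rcases eq_or_ne S 0 with h0 | h0
      · -- then `x_ℓ = 1` is covered by the weight `1 - S = 1` alone
        rw [h0]
        linarith [hcross i h2, (hx i).2]
      · field_simp
        ring
    · ring

section facet

variable {g : ℕ → ℝ}

lemma facetBound_eq (hg : AntitoneOn g (Set.Icc 1 (n + 1))) {ℓ : ℕ} (hℓ : ℓ ≤ n)
    (x : Fin n → ℝ) :
    facetBound g ℓ x = (1 - prefixSum x ℓ) * g (ℓ + 1) + ∑ j with j.val < ℓ, x j * g (j + 1) := by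
  have hterm : ∀ j : Fin n, max (g (j + 1) - g (ℓ + 1)) 0 * x j =
      if (j : ℕ) < ℓ then x j * g (j + 1) - x j * g (ℓ + 1) else 0 := by
    intro j
    split_ifs with hj
    · rw [max_eq_left (sub_nonneg.2 (hg ⟨by omega, by omega⟩ ⟨by omega, by omega⟩ (by omega)))]
      ring
    · rw [max_eq_right (sub_nonpos.2 (hg ⟨by omega, by omega⟩ ⟨by omega, by omega⟩ (by omega))),
        zero_mul]
  simp only [facetBound, hterm, ← sum_filter, sum_sub_distrib, prefixSum]
  rw [← sum_mul]
  ring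

lemma facetBound_smul_add_smul (ℓ : ℕ) (x y : Fin n → ℝ) {a b : ℝ} (hab : a + b = 1) :
    facetBound g ℓ (a • x + b • y) = a * facetBound g ℓ x + b * facetBound g ℓ y := by
  have hsum : ∀ c : Fin n → ℝ, ∑ j, c j * (a • x + b • y) j =
      a * ∑ j, c j * x j + b * ∑ j, c j * y j := fun c => by
    simp only [mul_sum, ← sum_add_distrib, Pi.add_apply, Pi.smul_apply, smul_eq_mul]
    exact sum_congr rfl fun j _ => by ring
  rw [facetBound, hsum, facetBound, facetBound]
  linear_combination -g (ℓ + 1) * hab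

end facet

lemma convex_polytope (g : ℕ → ℝ) : Convex ℝ (polytope n g) := by
  rintro ⟨w₁, x₁⟩ ⟨hx₁, hw₁⟩ ⟨w₂, x₂⟩ ⟨hx₂, hw₂⟩ a b ha hb hab
  refine ⟨fun j => convex_Icc (0 : ℝ) 1 (hx₁ j) (hx₂ j) ha hb hab, fun ℓ hℓ => ?_⟩
  show a * w₁ + b * w₂ ≤ facetBound g ℓ (a • x₁ + b • x₂)
  rw [facetBound_smul_add_smul ℓ x₁ x₂ hab]
  gcongr
  exacts [hw₁ ℓ hℓ, hw₂ ℓ hℓ]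

section mixedSet

variable {u : ℕ → ℝ} {u0 : ℝ}

lemma Phi_assortment_le_facetBound (hg : AntitoneOn (singletonValue u u0) (Set.Icc 1 (n + 1)))
    (hg0 : singletonValue u u0 (n + 1) = 0) {x : Fin n → ℝ} (hx : ∀ j, x j = 0 ∨ x j = 1)
    {ℓ : ℕ} (hℓ : ℓ ∈ Finset.Icc 1 n) :
    Phi 1 u u0 (assortment x) ≤ facetBound (singletonValue u u0) ℓ x := by
  set g := singletonValue u u0
  obtain ⟨hℓ1, hℓn⟩ := Finset.mem_Icc.1 hℓ
  have hterm : ∀ j : Fin n, 0 ≤ max (g (j + 1) - g (ℓ + 1)) 0 * x j := fun j =>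
    mul_nonneg (le_max_right _ _) (by rcases hx j with h | h <;> simp [h])
  refine Phi_one_le ?_ fun a ha => ?_
  · have : 0 ≤ g (ℓ + 1) := hg0 ▸ hg ⟨by omega, by omega⟩ ⟨by omega, le_rfl⟩ (by omega)
    exact add_nonneg this (sum_nonneg fun j _ => hterm j)
  · obtain ⟨j, hj, rfl⟩ := mem_image.1 ha
    have hxj : x j = 1 := (mem_filter.1 hj).2
    calc g (j + 1) ≤ g (ℓ + 1) + max (g (j + 1) - g (ℓ + 1)) 0 * x j := by
          rw [hxj, mul_one]; linarith [le_max_left (g (j + 1) - g (ℓ + 1)) 0]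
      _ ≤ facetBound g ℓ x := by
          unfold facetBound
          gcongr
          exact single_le_sum (fun j _ => hterm j) (mem_univ j)

lemma mixedSet_subset_polytope (hg : AntitoneOn (singletonValue u u0) (Set.Icc 1 (n + 1)))
    (hg0 : singletonValue u u0 (n + 1) = 0) :
    mixedSet n u u0 ⊆ polytope n (singletonValue u u0) := by
  intro p ⟨hx, hw⟩
  exact ⟨fun j => by rcases hx j with h | h <;> rw [h] <;> norm_num,
    fun ℓ hℓ => hw.trans (Phi_assortment_le_facetBound hg hg0 hx hℓ)⟩

lemma mk_singletonValue_mem_convexHull_mixedSet (hg0 : singletonValue u u0 (n + 1) = 0)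
    {k : ℕ} (hk : k ≤ n) {y : Fin n → ℝ} (hy : ∀ i, y i ∈ Set.Icc 0 1)
    (hyk : ∀ i : Fin n, (i : ℕ) = k → y i = 1) :
    (singletonValue u u0 (k + 1), y) ∈ convexHull ℝ (mixedSet n u u0) := by
  have hV : {singletonValue u u0 (k + 1)} ×ˢ
      {z : Fin n → ℝ | (∀ i, z i = 0 ∨ z i = 1) ∧ ∀ i, y i = 1 → z i = 1} ⊆ mixedSet n u u0 := by
    rintro ⟨w, z⟩ ⟨rfl, hz01, hz1⟩
    refine ⟨hz01, ?_⟩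
    rcases hk.lt_or_eq with hk | rfl
    · exact le_Phi_of_mem le_rfl
        (mem_image.2 ⟨⟨k, hk⟩, mem_filter.2 ⟨mem_univ _, hz1 _ (hyk _ rfl)⟩, rfl⟩)
    · exact hg0 ▸ Phi_nonneg
  refine convexHull_mono hV ?_
  rw [convexHull_prod, convexHull_singleton]
  exact ⟨rfl, mem_convexHull_binary_of_mem_Icc hy⟩

lemma mk_facetBound_mem_convexHull_mixedSet
    (hg : AntitoneOn (singletonValue u u0) (Set.Icc 1 (n + 1)))
    (hg0 : singletonValue u u0 (n + 1) = 0) {x : Fin n → ℝ} (hx : ∀ j, x j ∈ Set.Icc 0 1)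
    {ℓ : ℕ} (hℓ : ℓ ≤ n) (hS : prefixSum x ℓ ≤ 1)
    (hcross : ∀ i : Fin n, (i : ℕ) = ℓ → 1 ≤ prefixSum x ℓ + x i) :
    (facetBound (singletonValue u u0) ℓ x, x) ∈ convexHull ℝ (mixedSet n u u0) := by
  set g := singletonValue u u0
  set S := prefixSum x ℓ
  have hS0 : 0 ≤ S := sum_nonneg fun (j : Fin n) _ => (hx j).1
  set q := tailVector x ℓ fun t => (t - (1 - S)) / S
  have hq : ∀ i, q i ∈ Set.Icc 0 1 := tailVector_mem_Icc hx fun i hi =>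
    ⟨div_nonneg (by linarith [hcross i hi]) hS0, div_le_one_of_le₀ (by linarith [(hx i).2]) hS0⟩
  have hcomb : (1 - S) • (g (ℓ + 1), tailVector x ℓ fun _ => 1) +
      ∑ j with j.val < ℓ, x j • (g (j + 1), Function.update q j 1) = (facetBound g ℓ x, x) := by
    ext i
    · simp only [Prod.fst_add, Prod.smul_fst, Prod.fst_sum, smul_eq_mul, facetBound_eq hg hℓ x]
      rfl
    · conv_rhs => rw [← smul_tailVector_add_sum_smul_update hx hcross]
      simp only [Prod.snd_add, Prod.smul_snd, Prod.snd_sum]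
      rfl
  rw [← hcomb]
  refine (convex_convexHull ℝ _).smul_add_sum_smul_mem (sub_nonneg.2 hS) (fun j _ => (hx j).1)
    (sub_add_cancel 1 S) ?_ fun j _ => ?_
  · exact mk_singletonValue_mem_convexHull_mixedSet hg0 hℓ
      (tailVector_mem_Icc hx fun _ _ => ⟨zero_le_one, le_rfl⟩) fun i hi => by simp [tailVector, hi]
  · refine mk_singletonValue_mem_convexHull_mixedSet hg0 j.isLt.le (fun i => ?_)
      fun i hi => by simp [Fin.ext hi]
    rw [Function.update_apply]
    split_ifs
    exacts [⟨zero_le_one, le_rfl⟩, hq i]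

lemma polytope_subset_convexHull_mixedSet (hn : 1 ≤ n)
    (hg : AntitoneOn (singletonValue u u0) (Set.Icc 1 (n + 1)))
    (hg0 : singletonValue u u0 (n + 1) = 0) :
    polytope n (singletonValue u u0) ⊆ convexHull ℝ (mixedSet n u u0) := by
  rintro ⟨w, x⟩ ⟨hx, hw⟩
  obtain ⟨ℓ, hℓ, hS, hcross⟩ := exists_prefixSum_crossing hn hx
  exact mem_convexHull_of_le_fst (s := mixedSet n u u0) (fun p hp w hw => ⟨hp.1, hw.trans hp.2⟩)
    (mk_facetBound_mem_convexHull_mixedSet hg hg0 hx (Finset.mem_Icc.1 hℓ).2 hS hcross) (hw ℓ hℓ)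

theorem convexHull_mixedSet (hn : 1 ≤ n)
    (hg : AntitoneOn (singletonValue u u0) (Set.Icc 1 (n + 1)))
    (hg0 : singletonValue u u0 (n + 1) = 0) :
    convexHull ℝ (mixedSet n u u0) = polytope n (singletonValue u u0) :=
  (convexHull_min (mixedSet_subset_polytope hg hg0) (convex_polytope _)).antisymm
    (polytope_subset_convexHull_mixedSet hn hg hg0)

end mixedSet

theorem stmt_11_general (n : ℕ) (hn : 1 ≤ n) (u : ℕ → ℝ) (u0 : ℝ) (hu0 : 0 < u0)
    (hn1 : u (n + 1) = 0)
    (hmono : ∀ j ∈ Finset.Icc 1 (n+1), ∀ k ∈ Finset.Icc 1 (n+1), j ≤ k → u k ≤ u j)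
    (X P : Set (ℝ × (Fin n → ℝ)))
    (hX : X = {p | (∀ j, p.2 j = 0 ∨ p.2 j = 1) ∧
      p.1 ≤ Phi 1 u u0 ((Finset.univ.filter fun j : Fin n => p.2 j = 1).image
        fun j : Fin n => (j : ℕ) + 1)})
    (hP : P = {p | (∀ j, 0 ≤ p.2 j ∧ p.2 j ≤ 1) ∧ ∀ ℓ ∈ Finset.Icc 1 n,
      p.1 ≤ u (ℓ+1) / (u (ℓ+1) + u0) +
        ∑ j : Fin n,
          max (u ((j:ℕ)+1) / (u ((j:ℕ)+1) + u0) - u (ℓ+1) / (u (ℓ+1) + u0)) 0 * p.2 j}) :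
    convexHull ℝ X = P := by
  have hu : AntitoneOn u (Set.Icc 1 (n + 1)) := fun j hj k hk hjk =>
    hmono j (Finset.mem_Icc.2 hj) k (Finset.mem_Icc.2 hk) hjk
  have hg : AntitoneOn (singletonValue u u0) (Set.Icc 1 (n + 1)) :=
    antitoneOn_singletonValue hu0 hu fun k hk => hn1 ▸ hu hk ⟨by omega, le_rfl⟩ hk.2
  have hg0 : singletonValue u u0 (n + 1) = 0 := by simp [singletonValue, hn1]
  subst hX hP
  exact convexHull_mixedSet hn hg hg0

/-- for `γ = 1`, the convex hull of
`X = {(w,x) ∈ ℝ × {0,1}ⁿ : w ≤ Φ(Sˣ)}` is described by the `n` inequalities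
`w ≤ u_{ℓ+1}/(u_{ℓ+1}+u₀) + ∑_j (u_j/(u_j+u₀) − u_{ℓ+1}/(u_{ℓ+1}+u₀))⁺ x_j`, `ℓ ∈ [n]`,
together with the bounds `0 ≤ x ≤ 1`. The coordinate `x j` (for `j : Fin n`) corresponds
to facility `(j:ℕ)+1 ∈ [n]`. -/
theorem stmt_11 (n : ℕ) (hn : 1 ≤ n) (u : ℕ → ℝ) (u0 : ℝ) (hu0 : 0 < u0)
    (hnn : ∀ j ∈ Finset.Icc 1 n, 0 ≤ u j) (hn1 : u (n + 1) = 0)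
    (hmono : ∀ j ∈ Finset.Icc 1 (n+1), ∀ k ∈ Finset.Icc 1 (n+1), j ≤ k → u k ≤ u j)
    (X P : Set (ℝ × (Fin n → ℝ)))
    (hX : X = {p | (∀ j, p.2 j = 0 ∨ p.2 j = 1) ∧
      p.1 ≤ Phi 1 u u0 ((Finset.univ.filter fun j : Fin n => p.2 j = 1).image
        fun j : Fin n => (j : ℕ) + 1)})
    (hP : P = {p | (∀ j, 0 ≤ p.2 j ∧ p.2 j ≤ 1) ∧ ∀ ℓ ∈ Finset.Icc 1 n,
      p.1 ≤ u (ℓ+1) / (u (ℓ+1) + u0) +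
        ∑ j : Fin n,
          max (u ((j:ℕ)+1) / (u ((j:ℕ)+1) + u0) - u (ℓ+1) / (u (ℓ+1) + u0)) 0 * p.2 j}) :
    convexHull ℝ X = P :=
  stmt_11_general n hn u u0 hu0 hn1 hmono X P hX hP
end

section
/- With Z_t(λ,τ) as defined and f(τ) = max { ∑_{j=q+1}^{p} u_j y_j : ∑_{j=q+1}^{p} y_j ≤ τ, y_j ∈ {0,1} } (the sum of the τ largest of u_{q+1},...,u_p, or all of them if there are fewer than τ), the value ν* = max { (∑_{j=1}^{p} u_j y_j)/(∑_{j=1}^{p} u_j y_j + u₀) − ∑_{j=1}^{q} α_j y_j : ∑_{j=1}^{p} y_j ≤ γ, y ∈ {0,1}^p } satisfies ν* = max { Z_q(f(γ−τ), τ) : τ = 0, 1, ..., min{γ, q} }. -/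
open Finset

/-- `Z_t(λ,τ)` as in the dynamic program. -/
noncomputable def Z (u α : ℕ → ℝ) (u0 : ℝ) (t : ℕ) (lam : ℝ) (τ : ℕ) : ℝ :=
  sSup ((((Finset.Icc 1 t).powerset.filter fun A => A.card = τ).image
    fun A => ((∑ j ∈ A, u j) + lam) / ((∑ j ∈ A, u j) + lam + u0) - ∑ j ∈ A, α j : Finset ℝ)
    : Set ℝ)

/-- `f(τ) = max { ∑_{j=q+1}^{p} u_j y_j : at most τ ones }`. -/
noncomputable def fTop (u : ℕ → ℝ) (q p τ : ℕ) : ℝ :=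
  sSup ((((Finset.Icc (q + 1) p).powerset.filter fun B => B.card ≤ τ).image
    fun B => ∑ j ∈ B, u j : Finset ℝ) : Set ℝ)

/-- `ν* = max { (∑_{j≤p} u_j y_j)/(∑_{j≤p} u_j y_j + u₀) − ∑_{j≤q} α_j y_j : ∑ y_j ≤ γ }`. -/
noncomputable def nuStar (u α : ℕ → ℝ) (u0 : ℝ) (p q γ : ℕ) : ℝ :=
  sSup ((((Finset.Icc 1 p).powerset.filter fun A => A.card ≤ γ).image
    fun A => (∑ j ∈ A, u j) / ((∑ j ∈ A, u j) + u0) - ∑ j ∈ A.filter (· ≤ q), α j : Finset ℝ)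
    : Set ℝ)

lemma ratio_mono {u0 x y : ℝ} (hu0 : 0 < u0) (hx : 0 ≤ x) (hxy : x ≤ y) :
    x / (x + u0) ≤ y / (y + u0) := by
  rw [div_le_div_iff₀ (by linarith) (by linarith)]
  nlinarith

/-- the value of `fTop` is attained -/
lemma fTop_attained (u : ℕ → ℝ) (q p σ : ℕ) :
    ∃ B ⊆ Finset.Icc (q + 1) p, B.card ≤ σ ∧ (∑ j ∈ B, u j) = fTop u q p σ := by
  have hne : (((((Finset.Icc (q + 1) p).powerset.filter fun B => B.card ≤ σ).image
      fun B => ∑ j ∈ B, u j : Finset ℝ)) : Set ℝ).Nonempty := by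
    refine ⟨∑ j ∈ (∅ : Finset ℕ), u j, ?_⟩
    simp only [Finset.mem_coe, Finset.mem_image]
    exact ⟨∅, by simp, rfl⟩
  have hmem := hne.csSup_mem (Finset.finite_toSet _)
  rw [Finset.mem_coe, Finset.mem_image] at hmem
  obtain ⟨B, hB, hsum⟩ := hmem
  rw [Finset.mem_filter, Finset.mem_powerset] at hB
  exact ⟨B, hB.1, hB.2, hsum⟩

lemma le_fTop (u : ℕ → ℝ) (q p σ : ℕ) {B : Finset ℕ} (hB : B ⊆ Finset.Icc (q + 1) p)
    (hc : B.card ≤ σ) : (∑ j ∈ B, u j) ≤ fTop u q p σ := by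
  apply le_csSup (Finset.bddAbove _)
  rw [Finset.mem_coe, Finset.mem_image]
  exact ⟨B, by rw [Finset.mem_filter, Finset.mem_powerset]; exact ⟨hB, hc⟩, rfl⟩

lemma fTop_nonneg (u : ℕ → ℝ) (hu : ∀ j, 0 ≤ u j) (q p σ : ℕ) : 0 ≤ fTop u q p σ := by
  have := le_fTop u q p σ (B := ∅) (by simp) (by simp)
  simpa using this

/-- `ν* = max { Z_q(f(γ−τ), τ) : τ = 0, 1, …, min{γ,q} }`. -/
theorem stmt_17 (p q γ : ℕ) (hq : q ≤ p) (hγ : 1 ≤ γ) (u α : ℕ → ℝ)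
    (hu : ∀ j, 0 ≤ u j) (u0 : ℝ) (hu0 : 0 < u0) :
    nuStar u α u0 p q γ =
      sSup (((Finset.range (min γ q + 1)).image
        fun τ => Z u α u0 q (fTop u q p (γ - τ)) τ : Finset ℝ) : Set ℝ) := by
  apply le_antisymm
  · -- ν* ≤ RHS
    apply csSup_le
    · refine ⟨(∑ j ∈ (∅ : Finset ℕ), u j) / ((∑ j ∈ (∅ : Finset ℕ), u j) + u0)
        - ∑ j ∈ (∅ : Finset ℕ).filter (· ≤ q), α j, ?_⟩
      rw [Finset.mem_coe, Finset.mem_image]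
      exact ⟨∅, by simp, rfl⟩
    intro x hx
    rw [Finset.mem_coe, Finset.mem_image] at hx
    obtain ⟨A, hA, rfl⟩ := hx
    rw [Finset.mem_filter, Finset.mem_powerset] at hA
    obtain ⟨hAsub, hAcard⟩ := hA
    set C := A.filter (· ≤ q) with hCdef
    set B := A.filter (fun j => ¬ j ≤ q) with hBdef
    have hunion : C ∪ B = A := Finset.filter_union_filter_not_eq _ A
    have hsum : (∑ j ∈ C, u j) + (∑ j ∈ B, u j) = ∑ j ∈ A, u j :=
      Finset.sum_filter_add_sum_filter_not A _ u
    have hcard : C.card + B.card = A.card :=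
      Finset.card_filter_add_card_filter_not _
    have hCsub : C ⊆ Finset.Icc 1 q := by
      intro j hj
      rw [hCdef, Finset.mem_filter] at hj
      have := hAsub hj.1
      rw [Finset.mem_Icc] at this ⊢
      exact ⟨this.1, hj.2⟩
    have hBsub : B ⊆ Finset.Icc (q + 1) p := by
      intro j hj
      rw [hBdef, Finset.mem_filter] at hj
      have := hAsub hj.1
      rw [Finset.mem_Icc] at this ⊢
      omega
    have hCq : C.card ≤ q := by
      have := Finset.card_le_card hCsub
      simpa [Nat.card_Icc] using this
    have hCγ : C.card ≤ γ := le_trans (by omega) hAcard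
    have hBc : B.card ≤ γ - C.card := by omega
    have hsB : (∑ j ∈ B, u j) ≤ fTop u q p (γ - C.card) := le_fTop u q p _ hBsub hBc
    have hsCnn : 0 ≤ ∑ j ∈ C, u j := Finset.sum_nonneg fun j _ => hu j
    have hsBnn : 0 ≤ ∑ j ∈ B, u j := Finset.sum_nonneg fun j _ => hu j
    have step1 : (∑ j ∈ A, u j) / ((∑ j ∈ A, u j) + u0) - ∑ j ∈ A.filter (· ≤ q), α j ≤
        ((∑ j ∈ C, u j) + fTop u q p (γ - C.card)) /
          ((∑ j ∈ C, u j) + fTop u q p (γ - C.card) + u0) - ∑ j ∈ C, α j := by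
      have := ratio_mono (x := ∑ j ∈ A, u j) (y := (∑ j ∈ C, u j) + fTop u q p (γ - C.card))
        hu0 (by rw [← hsum]; linarith) (by rw [← hsum]; linarith)
      simp only [← hCdef]
      linarith
    have step2 : ((∑ j ∈ C, u j) + fTop u q p (γ - C.card)) /
          ((∑ j ∈ C, u j) + fTop u q p (γ - C.card) + u0) - ∑ j ∈ C, α j ≤
        Z u α u0 q (fTop u q p (γ - C.card)) C.card := by
      apply le_csSup (Finset.bddAbove _)
      rw [Finset.mem_coe, Finset.mem_image]
      exact ⟨C, by rw [Finset.mem_filter, Finset.mem_powerset]; exact ⟨hCsub, rfl⟩, rfl⟩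
    have step3 : Z u α u0 q (fTop u q p (γ - C.card)) C.card ≤
        sSup (((Finset.range (min γ q + 1)).image
          fun τ => Z u α u0 q (fTop u q p (γ - τ)) τ : Finset ℝ) : Set ℝ) := by
      apply le_csSup (Finset.bddAbove _)
      rw [Finset.mem_coe, Finset.mem_image]
      exact ⟨C.card, Finset.mem_range.2 (by omega), rfl⟩
    linarith
  · -- RHS ≤ ν*
    apply csSup_le
    · refine ⟨Z u α u0 q (fTop u q p (γ - 0)) 0, ?_⟩
      rw [Finset.mem_coe, Finset.mem_image]
      exact ⟨0, Finset.mem_range.2 (by omega), rfl⟩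
    intro x hx
    rw [Finset.mem_coe, Finset.mem_image] at hx
    obtain ⟨τ, hτ, rfl⟩ := hx
    rw [Finset.mem_range] at hτ
    have hτq : τ ≤ q := by omega
    have hτγ : τ ≤ γ := by omega
    apply csSup_le
    · obtain ⟨C, hCsub, hCcard⟩ :=
        Finset.exists_subset_card_eq (s := Finset.Icc 1 q) (n := τ)
          (by simpa [Nat.card_Icc] using hτq)
      refine ⟨((∑ j ∈ C, u j) + fTop u q p (γ - τ)) /
          ((∑ j ∈ C, u j) + fTop u q p (γ - τ) + u0) - ∑ j ∈ C, α j, ?_⟩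
      rw [Finset.mem_coe, Finset.mem_image]
      exact ⟨C, by rw [Finset.mem_filter, Finset.mem_powerset]; exact ⟨hCsub, hCcard⟩, rfl⟩
    intro y hy
    rw [Finset.mem_coe, Finset.mem_image] at hy
    obtain ⟨C, hC, rfl⟩ := hy
    rw [Finset.mem_filter, Finset.mem_powerset] at hC
    obtain ⟨hCsub, hCcard⟩ := hC
    obtain ⟨B, hBsub, hBcard, hBsum⟩ := fTop_attained u q p (γ - τ)
    have hdisj : Disjoint C B := by
      rw [Finset.disjoint_left]
      intro j hjC hjB
      have h1 := hCsub hjC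
      have h2 := hBsub hjB
      rw [Finset.mem_Icc] at h1 h2
      omega
    set A := C ∪ B with hAdef
    have hAsub : A ⊆ Finset.Icc 1 p := by
      intro j hj
      rw [hAdef, Finset.mem_union] at hj
      rw [Finset.mem_Icc]
      rcases hj with hj | hj
      · have := hCsub hj; rw [Finset.mem_Icc] at this; omega
      · have := hBsub hj; rw [Finset.mem_Icc] at this; omega
    have hAcard : A.card ≤ γ := by
      rw [hAdef, Finset.card_union_of_disjoint hdisj]
      omega
    have hAsum : (∑ j ∈ A, u j) = (∑ j ∈ C, u j) + (∑ j ∈ B, u j) :=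
      Finset.sum_union hdisj
    have hAfilt : A.filter (· ≤ q) = C := by
      rw [hAdef, Finset.filter_union]
      have h1 : C.filter (· ≤ q) = C := by
        apply Finset.filter_true_of_mem
        intro j hj
        have := hCsub hj; rw [Finset.mem_Icc] at this; exact this.2
      have h2 : B.filter (· ≤ q) = ∅ := by
        apply Finset.filter_false_of_mem
        intro j hj
        have := hBsub hj; rw [Finset.mem_Icc] at this; omega
      rw [h1, h2, Finset.union_empty]
    apply le_csSup (Finset.bddAbove _)
    rw [Finset.mem_coe, Finset.mem_image]
    refine ⟨A, by rw [Finset.mem_filter, Finset.mem_powerset]; exact ⟨hAsub, hAcard⟩, ?_⟩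
    rw [hAsum, hAfilt, hBsum]
end
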